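/- arXiv:1703.00918 — 3 statements merged into one kernel-verified Lean document; each statement's English description precedes it below -/
import Mathlib

section
/- Let n ≥ 2 and let X = μ + R•(A *ᵥ U) be an elliptically distributed random vector with benchmark Y = a ⬝ᵥ X. For every Borel set B₁ ⊆ ℝ such that the event B := {Y ∈ B₁} has P[B] > 0, the conditional covariance matrix of X on B satisfies Var_B[X] = k(B) • Σ + (Var_B[Y] − k(B)·â) • (β βᵀ), where k(B) := (1/(n−1)) · (E_B[R²] − E_B[(Y − a⬝ᵥμ)²]/â). -/
open MeasureTheory ProbabilityTheory Matrix

/-- Expectation of a real random variable under the conditional probability `P[|B]`. -/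
noncomputable def condE {Ω : Type*} [MeasurableSpace Ω] (P : Measure Ω) (B : Set Ω)
    (f : Ω → ℝ) : ℝ :=
  ∫ ω, f ω ∂(P[|B])

/-- Conditional variance on the event `B`. -/
noncomputable def condVar {Ω : Type*} [MeasurableSpace Ω] (P : Measure Ω) (B : Set Ω)
    (f : Ω → ℝ) : ℝ :=
  condE P B fun ω => (f ω - condE P B f) ^ 2

/-- Conditional covariance on the event `B`. -/
noncomputable def condCov {Ω : Type*} [MeasurableSpace Ω] (P : Measure Ω) (B : Set Ω)
    (f g : Ω → ℝ) : ℝ :=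
  condE P B fun ω => (f ω - condE P B f) * (g ω - condE P B g)

/-!
Write `V = R • U` and `w = Aᵀ a`, so that `X = μ + A V`, `Y = a ⬝ μ + w ⬝ V`, and `B` depends
on `V` only through `w ⬝ V`. A reflection `H_p` in a hyperplane `p ⟂ w` is orthogonal and fixes
`w`, so it preserves the law of `V` (independence of `R` and `U`, rotation invariance of `U`) and
the event `B`; hence the conditional law of `V` given `B` is `H_p`-invariant. Its second-moment
matrix then commutes with all these reflections, which forces it to be `c • 1 + d • w wᵀ`, and its
mean is a multiple of `w`. Since `‖U‖ = 1`, `E_B[R²] = tr E_B[V Vᵀ] = n c + d â` while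
`E_B[(w ⬝ V)²] = c â + d â²` (note `â = w ⬝ w`), so `k(B) = c`, and `Cov_B[X] = A Cov_B[V] Aᵀ` is
the claimed matrix.
-/

section Householder

variable {ι 𝕜 : Type*} [Fintype ι] [DecidableEq ι] [Field 𝕜]

noncomputable def householder (p : ι → 𝕜) : Matrix ι ι 𝕜 :=
  1 - (2 / (p ⬝ᵥ p)) • vecMulVec p p

lemma householder_mulVec (p v : ι → 𝕜) :
    householder p *ᵥ v = v - (2 / (p ⬝ᵥ p) * (p ⬝ᵥ v)) • p := by
  rw [householder, sub_mulVec, one_mulVec, smul_mulVec, vecMulVec_mulVec, op_smul_eq_smul,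
    smul_smul]

lemma householder_transpose (p : ι → 𝕜) : (householder p)ᵀ = householder p := by
  simp [householder, transpose_sub, transpose_smul, transpose_vecMulVec]

lemma dotProduct_householder_mulVec (p x v : ι → 𝕜) :
    x ⬝ᵥ householder p *ᵥ v = householder p *ᵥ x ⬝ᵥ v := by
  rw [dotProduct_mulVec, ← mulVec_transpose, householder_transpose]

lemma householder_mulVec_self {p : ι → 𝕜} (hp : p ⬝ᵥ p ≠ 0) : householder p *ᵥ p = -p := by
  rw [householder_mulVec, div_mul_cancel₀ _ hp]
  module

lemma householder_mulVec_of_dotProduct_eq_zero {p v : ι → 𝕜} (hpv : p ⬝ᵥ v = 0) :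
    householder p *ᵥ v = v := by
  simp [householder_mulVec, hpv]

lemma householder_mul_self (p : ι → 𝕜) : householder p * householder p = 1 := by
  refine ext_of_mulVec_single fun i => ?_
  rw [← mulVec_mulVec, one_mulVec, householder_mulVec, householder_mulVec p (Pi.single i 1)]
  by_cases hp : p ⬝ᵥ p = 0
  · simp [hp]
  simp only [dotProduct_sub, dotProduct_smul, smul_eq_mul]
  field_simp
  module

lemma householder_sub_mulVec {p q : ι → 𝕜} (hpq : p ⬝ᵥ p = q ⬝ᵥ q)
    (h : (p - q) ⬝ᵥ (p - q) ≠ 0) : householder (p - q) *ᵥ p = q := by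
  have : (p - q) ⬝ᵥ (p - q) = 2 * ((p - q) ⬝ᵥ p) := by
    simp only [sub_dotProduct, dotProduct_sub, dotProduct_comm q p, hpq]; ring
  rw [householder_mulVec, div_mul_eq_mul_div, ← this, div_self h, one_smul]
  abel

end Householder

lemma Matrix.IsSymm.dotProduct_mulVec_comm {ι : Type*} [Fintype ι] {K : Matrix ι ι ℝ}
    (hK : K.IsSymm) (x y : ι → ℝ) : x ⬝ᵥ K *ᵥ y = y ⬝ᵥ K *ᵥ x := by
  rw [dotProduct_mulVec, ← mulVec_transpose, hK.eq, dotProduct_comm]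

section ReflectionInvariance

variable {ι : Type*} [Fintype ι] [DecidableEq ι] {K : Matrix ι ι ℝ} {w : ι → ℝ}

def HouseholderInvariant (w : ι → ℝ) (K : Matrix ι ι ℝ) : Prop :=
  ∀ p, p ⬝ᵥ w = 0 → householder p * K * householder p = K

namespace HouseholderInvariant

lemma householder_mulVec_dotProduct_mulVec (hK : HouseholderInvariant w K) {p : ι → ℝ}
    (hp : p ⬝ᵥ w = 0) (x y : ι → ℝ) :
    householder p *ᵥ x ⬝ᵥ K *ᵥ (householder p *ᵥ y) = x ⬝ᵥ K *ᵥ y := by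
  conv_rhs => rw [← hK p hp, ← mulVec_mulVec, ← mulVec_mulVec, dotProduct_householder_mulVec]

lemma dotProduct_mulVec_eq_zero (hK : HouseholderInvariant w K) {p : ι → ℝ}
    (hp : p ⬝ᵥ w = 0) : p ⬝ᵥ K *ᵥ w = 0 := by
  by_cases hpp : p ⬝ᵥ p = 0
  · simp [dotProduct_self_eq_zero.1 hpp]
  have := hK.householder_mulVec_dotProduct_mulVec hp p w
  rw [householder_mulVec_self hpp, householder_mulVec_of_dotProduct_eq_zero hp,
    neg_dotProduct] at this
  linarith

lemma dotProduct_mulVec_self_eq (hK : HouseholderInvariant w K) {p q : ι → ℝ}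
    (hp : p ⬝ᵥ w = 0) (hq : q ⬝ᵥ w = 0) (hpq : p ⬝ᵥ p = q ⬝ᵥ q) :
    p ⬝ᵥ K *ᵥ p = q ⬝ᵥ K *ᵥ q := by
  by_cases h : (p - q) ⬝ᵥ (p - q) = 0
  · rw [sub_eq_zero.1 (dotProduct_self_eq_zero.1 h)]
  have hpqw : (p - q) ⬝ᵥ w = 0 := by rw [sub_dotProduct, hp, hq, sub_zero]
  rw [← hK.householder_mulVec_dotProduct_mulVec hpqw, householder_sub_mulVec hpq h]

lemma exists_dotProduct_mulVec_self_eq (hK : HouseholderInvariant w K) :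
    ∃ c, ∀ p, p ⬝ᵥ w = 0 → p ⬝ᵥ K *ᵥ p = c * (p ⬝ᵥ p) := by
  by_cases hu : ∃ u, u ⬝ᵥ w = 0 ∧ u ≠ 0
  swap
  · push Not at hu
    exact ⟨0, fun p hp => by simp [hu p hp]⟩
  obtain ⟨u, hu, hu0⟩ := hu
  have huu : u ⬝ᵥ u ≠ 0 := fun h => hu0 (dotProduct_self_eq_zero.1 h)
  refine ⟨u ⬝ᵥ K *ᵥ u / (u ⬝ᵥ u), fun p hp => ?_⟩
  -- `‖u‖ • p` and `‖p‖ • u` have the same length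
  set s := √(p ⬝ᵥ p)
  set t := √(u ⬝ᵥ u)
  have hs : s * s = p ⬝ᵥ p := Real.mul_self_sqrt (dotProduct_self_star_nonneg p)
  have ht : t * t = u ⬝ᵥ u := Real.mul_self_sqrt (dotProduct_self_star_nonneg u)
  have key := hK.dotProduct_mulVec_self_eq (p := t • p) (q := s • u)
    (by rw [smul_dotProduct, hp, smul_zero]) (by rw [smul_dotProduct, hu, smul_zero])
    (by simp only [smul_dotProduct, dotProduct_smul, smul_eq_mul]
        linear_combination (p ⬝ᵥ p) * ht - (u ⬝ᵥ u) * hs)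
  simp only [mulVec_smul, smul_dotProduct, dotProduct_smul, smul_eq_mul, ← mul_assoc, ht,
    hs] at key
  field_simp
  linarith

lemma exists_dotProduct_mulVec_eq (hK : HouseholderInvariant w K) (hKs : K.IsSymm) :
    ∃ c, ∀ p q, p ⬝ᵥ w = 0 → q ⬝ᵥ w = 0 → p ⬝ᵥ K *ᵥ q = c * (p ⬝ᵥ q) := by
  obtain ⟨c, hc⟩ := hK.exists_dotProduct_mulVec_self_eq
  refine ⟨c, fun p q hp hq => ?_⟩
  have hadd := hc (p + q) (by rw [add_dotProduct, hp, hq, add_zero])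
  have hsub := hc (p - q) (by rw [sub_dotProduct, hp, hq, sub_zero])
  simp only [add_dotProduct, dotProduct_add, sub_dotProduct, dotProduct_sub, mulVec_add,
    mulVec_sub, hKs.dotProduct_mulVec_comm q p, dotProduct_comm q p] at hadd hsub
  linarith

theorem eq_smul_one_add_smul_vecMulVec (hK : HouseholderInvariant w K) (hKs : K.IsSymm)
    (hw : w ≠ 0) : ∃ c d : ℝ, K = c • 1 + d • vecMulVec w w := by
  obtain ⟨c, hc⟩ := hK.exists_dotProduct_mulVec_eq hKs
  have hww : w ⬝ᵥ w ≠ 0 := fun h => hw (dotProduct_self_eq_zero.1 h)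
  set d := (w ⬝ᵥ K *ᵥ w - c * (w ⬝ᵥ w)) / (w ⬝ᵥ w) ^ 2
  have split : ∀ x : ι → ℝ, ∃ (α : ℝ) (x' : ι → ℝ), x = α • w + x' ∧ x' ⬝ᵥ w = 0 := fun x =>
    ⟨x ⬝ᵥ w / (w ⬝ᵥ w), x - (x ⬝ᵥ w / (w ⬝ᵥ w)) • w, by abel, by
      rw [sub_dotProduct, smul_dotProduct, smul_eq_mul, div_mul_cancel₀ _ hww, sub_self]⟩
  have bilin : ∀ x y, x ⬝ᵥ K *ᵥ y = c * (x ⬝ᵥ y) + d * ((x ⬝ᵥ w) * (w ⬝ᵥ y)) := by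
    intro x y
    obtain ⟨α, x, rfl, hx⟩ := split x
    obtain ⟨β, y, rfl, hy⟩ := split y
    have hwy : w ⬝ᵥ K *ᵥ y = 0 := by
      rw [hKs.dotProduct_mulVec_comm, hK.dotProduct_mulVec_eq_zero hy]
    simp only [add_dotProduct, dotProduct_add, smul_dotProduct, dotProduct_smul, mulVec_add,
      mulVec_smul, smul_eq_mul, hK.dotProduct_mulVec_eq_zero hx, hwy, hc x y hx hy, hx,
      dotProduct_comm w y, hy, d]
    field_simp
    ring
  refine ⟨c, d, ext fun i j => ?_⟩
  simpa [single_dotProduct, mulVec_single_one, one_apply, Pi.single_apply, eq_comm,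
    vecMulVec_apply]
    using bilin (Pi.single i 1) (Pi.single j 1)

end HouseholderInvariant

lemma eq_smul_of_forall_householder_mulVec_eq {m : ι → ℝ} (hw : w ⬝ᵥ w ≠ 0)
    (hm : ∀ p, p ⬝ᵥ w = 0 → householder p *ᵥ m = m) :
    m = (m ⬝ᵥ w / (w ⬝ᵥ w)) • w := by
  set y := m - (m ⬝ᵥ w / (w ⬝ᵥ w)) • w
  have hy : y ⬝ᵥ w = 0 := by
    rw [sub_dotProduct, smul_dotProduct, smul_eq_mul, div_mul_cancel₀ _ hw, sub_self]
  suffices y = 0 from (sub_eq_zero.1 this)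
  by_contra hy0
  have hyy : y ⬝ᵥ y ≠ 0 := fun h => hy0 (dotProduct_self_eq_zero.1 h)
  have := hm y hy
  rw [← sub_add_cancel m ((m ⬝ᵥ w / (w ⬝ᵥ w)) • w), mulVec_add, mulVec_smul,
    householder_mulVec_self hyy, householder_mulVec_of_dotProduct_eq_zero hy] at this
  have h2y : (2 : ℝ) • y = 0 := by
    rw [two_smul, ← neg_eq_iff_add_eq_zero]; exact add_right_cancel this
  exact hy0 ((smul_eq_zero.1 h2y).resolve_left two_ne_zero)

end ReflectionInvariance

section Moments

variable {ι : Type*} {ν : Measure (ι → ℝ)}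

noncomputable def secondMomentMatrix (ν : Measure (ι → ℝ)) : Matrix ι ι ℝ :=
  Matrix.of fun k l => ∫ v, v k * v l ∂ν

lemma secondMomentMatrix_isSymm : (secondMomentMatrix ν).IsSymm :=
  IsSymm.ext fun k l => by simp only [secondMomentMatrix, of_apply, mul_comm]

variable [Fintype ι]

lemma memLp_dotProduct (hν : MemLp id 2 ν) (x : ι → ℝ) : MemLp (x ⬝ᵥ ·) 2 ν := by
  have := memLp_finsetSum Finset.univ fun k _ => (memLp_pi_iff.1 hν k).const_mul (x k)
  simpa [dotProduct] using this

lemma integral_dotProduct (hν : Integrable id ν) (x : ι → ℝ) :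
    ∫ v, x ⬝ᵥ v ∂ν = x ⬝ᵥ ∫ v, v ∂ν := by
  have hk : ∀ k, Integrable (fun v : ι → ℝ => v k) ν := integrable_pi_iff.1 hν
  simp only [dotProduct]
  rw [integral_finsetSum _ fun k _ => (hk k).const_mul (x k)]
  simp [integral_const_mul, eval_integral hk]

lemma integral_dotProduct_mul_dotProduct (hν : MemLp id 2 ν) (x y : ι → ℝ) :
    ∫ v, (x ⬝ᵥ v) * (y ⬝ᵥ v) ∂ν = x ⬝ᵥ secondMomentMatrix ν *ᵥ y := by
  have hkl : ∀ k l, Integrable (fun v : ι → ℝ => x k * y l * (v k * v l)) ν := fun k l =>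
    ((memLp_pi_iff.1 hν k).integrable_mul (memLp_pi_iff.1 hν l)).const_mul _
  have expand : ∀ v : ι → ℝ, (x ⬝ᵥ v) * (y ⬝ᵥ v) = ∑ k, ∑ l, x k * y l * (v k * v l) := by
    intro v
    simp only [dotProduct, Finset.sum_mul_sum]
    exact Finset.sum_congr rfl fun k _ => Finset.sum_congr rfl fun l _ => by ring
  simp_rw [expand]
  rw [integral_finsetSum _ fun k _ => integrable_finsetSum _ fun l _ => hkl k l]
  simp_rw [integral_finsetSum _ fun l _ => hkl _ l, integral_const_mul]
  simp only [dotProduct, mulVec, secondMomentMatrix, of_apply, Finset.mul_sum]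
  exact Finset.sum_congr rfl fun k _ => Finset.sum_congr rfl fun l _ => by ring

lemma trace_secondMomentMatrix (hν : MemLp id 2 ν) :
    (secondMomentMatrix ν).trace = ∫ v, v ⬝ᵥ v ∂ν := by
  simp only [dotProduct]
  have hk : ∀ k, Integrable (fun v : ι → ℝ => v k * v k) ν := fun k =>
    (memLp_pi_iff.1 hν k).integrable_mul (memLp_pi_iff.1 hν k)
  rw [integral_finsetSum _ fun k _ => hk k]
  rfl

lemma covariance_dotProduct [IsProbabilityMeasure ν] (hν : MemLp id 2 ν) (x y : ι → ℝ) :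
    cov[(x ⬝ᵥ ·), (y ⬝ᵥ ·); ν] =
      x ⬝ᵥ secondMomentMatrix ν *ᵥ y - (x ⬝ᵥ ∫ v, v ∂ν) * (y ⬝ᵥ ∫ v, v ∂ν) := by
  rw [covariance_eq_sub (memLp_dotProduct hν x) (memLp_dotProduct hν y)]
  simp only [Pi.mul_apply, integral_dotProduct_mul_dotProduct hν,
    integral_dotProduct (hν.integrable one_le_two)]

lemma integral_comp_mulVec_of_map_eq {O : Matrix ι ι ℝ} (hO : ν.map (O *ᵥ ·) = ν) {f : (ι → ℝ) → ℝ}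
    (hf : AEStronglyMeasurable f ν) : ∫ v, f (O *ᵥ v) ∂ν = ∫ v, f v ∂ν := by
  conv_rhs => rw [← hO]
  exact (integral_map (by fun_prop : Continuous (O *ᵥ ·)).aemeasurable (by rwa [hO])).symm

lemma mulVec_integral (hν : Integrable id ν) {O : Matrix ι ι ℝ} (hO : ν.map (O *ᵥ ·) = ν) :
    O *ᵥ ∫ v, v ∂ν = ∫ v, v ∂ν := by
  ext k
  calc (O *ᵥ ∫ v, v ∂ν) k = ∫ v, (O *ᵥ v) k ∂ν := (integral_dotProduct hν _).symm
    _ = ∫ v, v k ∂ν := integral_comp_mulVec_of_map_eq hO (continuous_apply k).aestronglyMeasurable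
    _ = (∫ v, v ∂ν) k := (eval_integral (integrable_pi_iff.1 hν) k).symm

lemma mul_secondMomentMatrix_mul_transpose (hν : MemLp id 2 ν) {O : Matrix ι ι ℝ}
    (hO : ν.map (O *ᵥ ·) = ν) : O * secondMomentMatrix ν * Oᵀ = secondMomentMatrix ν := by
  ext k l
  rw [mul_mul_apply, transpose_transpose, ← integral_dotProduct_mul_dotProduct hν]
  exact integral_comp_mulVec_of_map_eq hO (f := fun v => v k * v l) (by fun_prop)

end Moments

section HouseholderInvariantLaw

variable {ι : Type*} [Fintype ι] [DecidableEq ι] [Nontrivial ι] {ν : Measure (ι → ℝ)}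
  [IsProbabilityMeasure ν]

theorem covariance_dotProduct_of_map_householder (hν : MemLp id 2 ν) {w : ι → ℝ} (hw : w ≠ 0)
    (hinv : ∀ p, p ⬝ᵥ w = 0 → ν.map (householder p *ᵥ ·) = ν) (κ : ℝ)
    (hκ : κ = (∫ v, v ⬝ᵥ v ∂ν - (∫ v, (w ⬝ᵥ v) ^ 2 ∂ν) / (w ⬝ᵥ w)) / (Fintype.card ι - 1))
    (x y : ι → ℝ) :
    cov[(x ⬝ᵥ ·), (y ⬝ᵥ ·); ν] = κ * (x ⬝ᵥ y) + (cov[(w ⬝ᵥ ·), (w ⬝ᵥ ·); ν] - κ * (w ⬝ᵥ w))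
      * (x ⬝ᵥ w / (w ⬝ᵥ w) * (y ⬝ᵥ w / (w ⬝ᵥ w))) := by
  have hww : w ⬝ᵥ w ≠ 0 := fun h => hw (dotProduct_self_eq_zero.1 h)
  have hcard : (Fintype.card ι : ℝ) - 1 ≠ 0 := by
    rw [sub_ne_zero]; exact_mod_cast Fintype.one_lt_card.ne'
  have hM : HouseholderInvariant w (secondMomentMatrix ν) := fun p hp => by
    simpa only [householder_transpose] using mul_secondMomentMatrix_mul_transpose hν (hinv p hp)
  obtain ⟨c, d, hcd⟩ := hM.eq_smul_one_add_smul_vecMulVec secondMomentMatrix_isSymm hw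
  have hm := eq_smul_of_forall_householder_mulVec_eq hww fun p hp =>
    mulVec_integral (hν.integrable one_le_two) (hinv p hp)
  simp_rw [sq, integral_dotProduct_mul_dotProduct hν, ← trace_secondMomentMatrix hν] at hκ
  rw [covariance_dotProduct hν, covariance_dotProduct hν, hm, hκ, hcd]
  simp only [trace_add, trace_smul, trace_one, trace_vecMulVec, add_mulVec, smul_mulVec,
    one_mulVec, vecMulVec_mulVec, op_smul_eq_smul, dotProduct_add, dotProduct_smul,
    smul_eq_mul, dotProduct_comm w y]
  field_simp
  ring

end HouseholderInvariantLaw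

section Conditioning

variable {α β : Type*} [MeasurableSpace α] [MeasurableSpace β] {μ : Measure α}

lemma map_cond_preimage {f : α → β} (hf : Measurable f) {s : Set β} (hs : MeasurableSet s) :
    (μ[|f ⁻¹' s]).map f = (μ.map f)[|s] := by
  rw [ProbabilityTheory.cond, ProbabilityTheory.cond, Measure.map_smul,
    ← Measure.restrict_map hf hs, Measure.map_apply hf hs]

lemma map_cond_eq_self {f : α → α} (hf : Measurable f) (hμ : μ.map f = μ) {s : Set α}
    (hs : MeasurableSet s) (hfs : f ⁻¹' s = s) : (μ[|s]).map f = μ[|s] := by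
  calc (μ[|s]).map f = (μ[|f ⁻¹' s]).map f := by rw [hfs]
    _ = (μ.map f)[|s] := map_cond_preimage hf hs
    _ = μ[|s] := by rw [hμ]

lemma MeasureTheory.MemLp.cond {E : Type*} [NormedAddCommGroup E] {f : α → E} {p : ENNReal}
    (hf : MemLp f p μ) (s : Set α) : MemLp f p μ[|s] := by
  by_cases hs : μ s = 0
  · simp [cond_eq_zero_of_meas_eq_zero hs]
  exact (hf.restrict s).smul_measure (ENNReal.inv_ne_top.2 hs)

end Conditioning

lemma ProbabilityTheory.IndepFun.map_prodMk_eq {Ω α β : Type*} [MeasurableSpace Ω] [MeasurableSpace α]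
    [MeasurableSpace β] {P : Measure Ω} [IsFiniteMeasure P] {R : Ω → α} {U U' : Ω → β}
    (hRU : IndepFun R U P) (hRU' : IndepFun R U' P) (hR : AEMeasurable R P)
    (hU : AEMeasurable U P) (hU' : AEMeasurable U' P) (hUU' : P.map U = P.map U') :
    P.map (fun ω => (R ω, U ω)) = P.map (fun ω => (R ω, U' ω)) := by
  rw [(indepFun_iff_map_prod_eq_prod_map_map hR hU).1 hRU,
    (indepFun_iff_map_prod_eq_prod_map_map hR hU').1 hRU', hUU']

lemma norm_le_one_of_sum_sq_eq_one {ι : Type*} [Fintype ι] {x : ι → ℝ}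
    (hx : ∑ i, x i ^ 2 = 1) : ‖x‖ ≤ 1 := by
  refine (pi_norm_le_iff_of_nonneg zero_le_one).2 fun i => ?_
  rw [Real.norm_eq_abs, ← sq_le_one_iff_abs_le_one, ← hx]
  exact Finset.single_le_sum (f := fun i => x i ^ 2) (fun i _ => sq_nonneg _) (Finset.mem_univ i)

section CondExpectation

variable {Ω ι : Type*} [MeasurableSpace Ω] {P : Measure Ω} {B : Set Ω} {V : Ω → ι → ℝ}

lemma condVar_eq_condCov (f : Ω → ℝ) : condVar P B f = condCov P B f f := by
  simp only [_root_.condVar, condCov, sq]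

lemma condE_comp {f : (ι → ℝ) → ℝ} (hV : Measurable V) (hf : Measurable f) :
    condE P B (fun ω => f (V ω)) = ∫ v, f v ∂(P[|B]).map V :=
  (integral_map hV.aemeasurable hf.aestronglyMeasurable).symm

lemma condCov_const_add_dotProduct [Fintype ι] [IsProbabilityMeasure (P[|B])]
    (hV : Measurable V) (hV2 : MemLp id 2 ((P[|B]).map V)) (c c' : ℝ) (x y : ι → ℝ) :
    condCov P B (fun ω => c + x ⬝ᵥ V ω) (fun ω => c' + y ⬝ᵥ V ω)
      = cov[(x ⬝ᵥ ·), (y ⬝ᵥ ·); (P[|B]).map V] := by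
  have : IsProbabilityMeasure ((P[|B]).map V) := Measure.isProbabilityMeasure_map hV.aemeasurable
  rw [← covariance_const_add_left ((memLp_dotProduct hV2 x).integrable one_le_two) c,
    ← covariance_const_add_right ((memLp_dotProduct hV2 y).integrable one_le_two) c',
    covariance_map (by fun_prop) (by fun_prop) hV.aemeasurable]
  rfl

end CondExpectation

section Spherical

variable {Ω ι : Type*} [MeasurableSpace Ω] {P : Measure Ω} [Fintype ι] {R : Ω → ℝ}
  {U : Ω → ι → ℝ}

lemma memLp_smul_of_sum_sq_eq_one (hR : MemLp R 2 P) (hU : Measurable U)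
    (hU1 : ∀ᵐ ω ∂P, ∑ i, U ω i ^ 2 = 1) : MemLp (fun ω => R ω • U ω) 2 P := by
  refine MemLp.smul (p := 2) (q := ⊤) (memLp_top_of_bound hU.aestronglyMeasurable 1 ?_) hR
  filter_upwards [hU1] with ω hω using norm_le_one_of_sum_sq_eq_one hω

variable [IsProbabilityMeasure P]

lemma map_mulVec_map_smul (hRU : IndepFun R U P) (hR : Measurable R) (hU : Measurable U)
    {O : Matrix ι ι ℝ} (hO : P.map (fun ω => O *ᵥ U ω) = P.map U) :
    (P.map (fun ω => R ω • U ω)).map (O *ᵥ ·) = P.map (fun ω => R ω • U ω) := by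
  have hOm : Measurable (O *ᵥ · : (ι → ℝ) → ι → ℝ) := by fun_prop
  have hsmul : Measurable fun q : ℝ × (ι → ℝ) => q.1 • q.2 := by fun_prop
  have hpair := (hRU.comp measurable_id hOm).map_prodMk_eq hRU hR.aemeasurable
    (hOm.comp hU).aemeasurable hU.aemeasurable hO
  have hV : Measurable fun ω => R ω • U ω := hR.smul hU
  calc (P.map fun ω => R ω • U ω).map (O *ᵥ ·)
      = (P.map fun ω => (R ω, O *ᵥ U ω)).map fun q => q.1 • q.2 := by
        rw [Measure.map_map hOm hV,
          Measure.map_map hsmul (hR.prodMk (hOm.comp hU) : Measurable fun ω => (R ω, O *ᵥ U ω))]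
        simp only [Function.comp_def, mulVec_smul]
    _ = (P.map fun ω => (R ω, U ω)).map fun q => q.1 • q.2 := by
        simpa only [Function.comp_def, id] using congrArg (Measure.map _) hpair
    _ = P.map fun ω => R ω • U ω := Measure.map_map hsmul (hR.prodMk hU)

variable [DecidableEq ι]

lemma map_householder_map_cond (hRU : IndepFun R U P) (hR : Measurable R) (hU : Measurable U)
    (hUrot : ∀ O : Matrix ι ι ℝ, O * Oᵀ = 1 → P.map (fun ω => O *ᵥ U ω) = P.map U)
    {w : ι → ℝ} {D : Set ℝ} (hD : MeasurableSet D) {p : ι → ℝ} (hp : p ⬝ᵥ w = 0) :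
    ((P[|(fun ω => w ⬝ᵥ R ω • U ω) ⁻¹' D]).map (fun ω => R ω • U ω)).map (householder p *ᵥ ·)
      = (P[|(fun ω => w ⬝ᵥ R ω • U ω) ⁻¹' D]).map (fun ω => R ω • U ω) := by
  have hV : Measurable fun ω => R ω • U ω := hR.smul hU
  have hC : MeasurableSet ((w ⬝ᵥ ·) ⁻¹' D : Set (ι → ℝ)) := hD.preimage (by fun_prop)
  have hHC : (householder p *ᵥ ·) ⁻¹' ((w ⬝ᵥ ·) ⁻¹' D) = (w ⬝ᵥ ·) ⁻¹' D := by
    ext v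
    simp only [Set.mem_preimage, dotProduct_householder_mulVec,
      householder_mulVec_of_dotProduct_eq_zero hp]
  rw [show (fun ω => w ⬝ᵥ R ω • U ω) ⁻¹' D = (fun ω => R ω • U ω) ⁻¹' ((w ⬝ᵥ ·) ⁻¹' D) from rfl,
    map_cond_preimage hV hC]
  exact map_cond_eq_self (by fun_prop) (map_mulVec_map_smul hRU hR hU
    (hUrot _ (by rw [householder_transpose, householder_mul_self]))) hC hHC

theorem condCov_const_add_dotProduct_smul [Nontrivial ι] (hR : Measurable R)
    (hU : Measurable U) (hRL2 : MemLp R 2 P) (hU1 : ∀ᵐ ω ∂P, ∑ i, U ω i ^ 2 = 1)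
    (hUrot : ∀ O : Matrix ι ι ℝ, O * Oᵀ = 1 → P.map (fun ω => O *ᵥ U ω) = P.map U)
    (hRU : IndepFun R U P) {w : ι → ℝ} (hw : w ≠ 0) {D : Set ℝ} (hD : MeasurableSet D)
    {B : Set Ω} (hB : B = (fun ω => w ⬝ᵥ R ω • U ω) ⁻¹' D) (hB0 : P B ≠ 0) (κ : ℝ)
    (hκ : κ = (condE P B (fun ω => R ω ^ 2) - condE P B (fun ω => (w ⬝ᵥ R ω • U ω) ^ 2)
      / (w ⬝ᵥ w)) / (Fintype.card ι - 1))
    (c c' c₀ : ℝ) (x y : ι → ℝ) :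
    condCov P B (fun ω => c + x ⬝ᵥ R ω • U ω) (fun ω => c' + y ⬝ᵥ R ω • U ω)
      = κ * (x ⬝ᵥ y) + (condVar P B (fun ω => c₀ + w ⬝ᵥ R ω • U ω) - κ * (w ⬝ᵥ w))
        * (x ⬝ᵥ w / (w ⬝ᵥ w) * (y ⬝ᵥ w / (w ⬝ᵥ w))) := by
  have : IsProbabilityMeasure (P[|B]) := cond_isProbabilityMeasure hB0
  set V := fun ω => R ω • U ω
  have hV : Measurable V := hR.smul hU
  have hV2 : MemLp id 2 ((P[|B]).map V) :=
    (memLp_map_measure_iff aestronglyMeasurable_id hV.aemeasurable).2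
      ((memLp_smul_of_sum_sq_eq_one hRL2 hU hU1).cond B)
  have : IsProbabilityMeasure ((P[|B]).map V) := Measure.isProbabilityMeasure_map hV.aemeasurable
  have hRV : condE P B (fun ω => R ω ^ 2) = condE P B (fun ω => V ω ⬝ᵥ V ω) := by
    refine integral_congr_ae (cond_absolutelyContinuous.ae_le (hU1.mono fun ω hω => ?_))
    simp only [V, dotProduct, Pi.smul_apply, smul_eq_mul, ← sq, mul_pow, ← Finset.mul_sum, hω,
      mul_one]
  rw [condVar_eq_condCov, condCov_const_add_dotProduct hV hV2,
    condCov_const_add_dotProduct hV hV2]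
  refine covariance_dotProduct_of_map_householder hV2 hw
    (fun p hp => hB ▸ map_householder_map_cond hRU hR hU hUrot hD hp) κ ?_ x y
  rw [hκ, hRV, ← condE_comp hV (f := fun v => v ⬝ᵥ v) (by fun_prop),
    ← condE_comp hV (f := fun v => (w ⬝ᵥ v) ^ 2) (by fun_prop)]

end Spherical

theorem conditional_covariance_matrix_elliptical_general
    {Ω : Type*} [MeasurableSpace Ω] (P : Measure Ω) [IsProbabilityMeasure P]
    (n : ℕ) (hn : 2 ≤ n)
    (R : Ω → ℝ) (U : Ω → Fin n → ℝ) (hR : Measurable R) (hU : Measurable U)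
    (hRL2 : MemLp R 2 P)
    (hUsphere : ∀ᵐ ω ∂P, ∑ i, U ω i ^ 2 = 1)
    (hUrot : ∀ O : Matrix (Fin n) (Fin n) ℝ, O * Oᵀ = 1 →
      Measure.map (fun ω => O *ᵥ U ω) P = Measure.map U P)
    (hindep : IndepFun R U P)
    (μv : Fin n → ℝ) (A : Matrix (Fin n) (Fin n) ℝ) (hA : IsUnit A.det)
    (a : Fin n → ℝ) (ha : a ≠ 0)
    (X : Ω → Fin n → ℝ) (hX : X = fun ω => μv + R ω • (A *ᵥ U ω))
    (Y : Ω → ℝ) (hY : Y = fun ω => a ⬝ᵥ X ω)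
    (S : Matrix (Fin n) (Fin n) ℝ) (hS : S = A * Aᵀ)
    (ahat : ℝ) (hahat : ahat = a ⬝ᵥ (S *ᵥ a))
    (β : Fin n → ℝ) (hβ : β = (1 / ahat) • (S *ᵥ a))
    (B₁ : Set ℝ) (hB₁ : MeasurableSet B₁)
    (B : Set Ω) (hB : B = Y ⁻¹' B₁) (hBpos : 0 < P B)
    (kB : ℝ)
    (hkB : kB = (1 / ((n : ℝ) - 1)) *
      (condE P B (fun ω => R ω ^ 2) - condE P B (fun ω => (Y ω - a ⬝ᵥ μv) ^ 2) / ahat)) :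
    ∀ i j, condCov P B (fun ω => X ω i) (fun ω => X ω j)
      = kB * S i j + (condVar P B Y - kB * ahat) * (β i * β j) := by
  intro i j
  have : Nontrivial (Fin n) := Fin.nontrivial_iff_two_le.2 hn
  set w := Aᵀ *ᵥ a
  have hXi : ∀ k, (fun ω => X ω k) = fun ω => μv k + A k ⬝ᵥ R ω • U ω := fun k =>
    funext fun ω => by simp only [hX]; rw [← mulVec_smul]; rfl
  have hYV : Y = fun ω => a ⬝ᵥ μv + w ⬝ᵥ R ω • U ω := funext fun ω => by
    simp only [hY, hX]
    rw [← mulVec_smul, dotProduct_add, dotProduct_mulVec, ← mulVec_transpose]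
  have hahat' : ahat = w ⬝ᵥ w := by
    rw [hahat, hS, ← mulVec_mulVec, dotProduct_mulVec, ← mulVec_transpose]
  have hw : w ≠ 0 := fun h => ha <| mulVec_injective_iff_isUnit.2
    ((isUnit_iff_isUnit_det _).2 (by rwa [det_transpose])) (h.trans (mulVec_zero _).symm)
  rw [hXi, hXi, hYV, condCov_const_add_dotProduct_smul hR hU hRL2 hUsphere hUrot hindep hw
    (hB₁.preimage (measurable_const_add _)) (by rw [hB, hYV]; rfl) hBpos.ne' kB ?_,
    hβ, hS, ← mulVec_mulVec, ← hahat']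
  · change _ = kB * (A i ⬝ᵥ A j) + _ * (1 / ahat * (A i ⬝ᵥ w) * (1 / ahat * (A j ⬝ᵥ w)))
    ring
  · rw [hkB, hYV, Fintype.card_fin, hahat']
    simp only [add_sub_cancel_left]
    ring

theorem conditional_covariance_matrix_elliptical
    {Ω : Type*} [MeasurableSpace Ω] (P : Measure Ω) [IsProbabilityMeasure P]
    (n : ℕ) (hn : 2 ≤ n)
    (R : Ω → ℝ) (U : Ω → Fin n → ℝ) (hR : Measurable R) (hU : Measurable U)
    (hRpos : ∀ᵐ ω ∂P, 0 < R ω)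
    (hR2 : ∫ ω, R ω ^ 2 ∂P = (n : ℝ))
    (hRL2 : MemLp R 2 P)
    (hUsphere : ∀ᵐ ω ∂P, ∑ i, U ω i ^ 2 = 1)
    (hUrot : ∀ O : Matrix (Fin n) (Fin n) ℝ, O * Oᵀ = 1 →
      Measure.map (fun ω => O *ᵥ U ω) P = Measure.map U P)
    (hindep : IndepFun R U P)
    (μv : Fin n → ℝ) (A : Matrix (Fin n) (Fin n) ℝ) (hA : IsUnit A.det)
    (a : Fin n → ℝ) (ha : a ≠ 0)
    (X : Ω → Fin n → ℝ) (hX : X = fun ω => μv + R ω • (A *ᵥ U ω))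
    (Y : Ω → ℝ) (hY : Y = fun ω => a ⬝ᵥ X ω)
    (hXL2 : ∀ i, MemLp (fun ω => X ω i) 2 P)
    (S : Matrix (Fin n) (Fin n) ℝ) (hS : S = A * Aᵀ)
    (ahat : ℝ) (hahat : ahat = a ⬝ᵥ (S *ᵥ a))
    (β : Fin n → ℝ) (hβ : β = (1 / ahat) • (S *ᵥ a))
    (B₁ : Set ℝ) (hB₁ : MeasurableSet B₁)
    (B : Set Ω) (hB : B = Y ⁻¹' B₁) (hBpos : 0 < P B)
    (kB : ℝ)
    (hkB : kB = (1 / ((n : ℝ) - 1)) *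
      (condE P B (fun ω => R ω ^ 2) - condE P B (fun ω => (Y ω - a ⬝ᵥ μv) ^ 2) / ahat)) :
    ∀ i j, condCov P B (fun ω => X ω i) (fun ω => X ω j)
      = kB * S i j + (condVar P B Y - kB * ahat) * (β i * β j) :=
  conditional_covariance_matrix_elliptical_general P n hn R U hR hU hRL2 hUsphere hUrot hindep μv A
    hA a ha X hX Y hY S hS ahat hahat β hβ B₁ hB₁ B hB hBpos kB hkB
end

section
/- Let n ≥ 2, let R be a positive real random variable with E[R²] = n and let U be independent of R and uniformly distributed on the unit sphere of ℝⁿ; set Z := R • U. Let B₁ ⊆ ℝ be Borel with P[Z₁ ∈ B₁] > 0 and write B := {Z₁ ∈ B₁}. Then: (i) E_B[Z_i Z_j] = 0 whenever i ≠ j; (ii) E_B[Z_i] = 0 for every i ≥ 2; and (iii) E_B[Z_i²] = E_B[Z_j²] for all i, j ≥ 2. -/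
/-!
Flipping the sign of a coordinate other than the first, or swapping two such coordinates, is an
orthogonal map `O` fixing the first coordinate. It preserves the law of `U`, hence, by
independence, the joint law of `(R, U)`; and since `O (R • U) = R • O U` while the event `B`
depends only on the first coordinate of `Z`, `Z` and `O Z` have the same integrals over `B`.
Moments that change sign under a flip therefore vanish on `B`, and a swap exchanges the second
moments.
-/

open MeasureTheory ProbabilityTheory Matrix

lemma condE_eq_smul_setIntegral {Ω : Type*} [MeasurableSpace Ω] (P : Measure Ω) (B : Set Ω)
    (f : Ω → ℝ) : condE P B f = (P B)⁻¹.toReal • ∫ ω in B, f ω ∂P := by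
  rw [condE, ProbabilityTheory.cond, integral_smul_measure]

lemma map_prodMk_comp_eq_of_indepFun {Ω α β : Type*} [MeasurableSpace Ω] [MeasurableSpace α]
    [MeasurableSpace β] {P : Measure Ω} [IsFiniteMeasure P] {X : Ω → α} {Y : Ω → β}
    {T : β → β} (hX : Measurable X) (hY : Measurable Y) (hT : Measurable T)
    (hXY : IndepFun X Y P) (hTY : P.map (fun ω => T (Y ω)) = P.map Y) :
    P.map (fun ω => (X ω, T (Y ω))) = P.map (fun ω => (X ω, Y ω)) := by
  have hXTY : IndepFun X (fun ω => T (Y ω)) P := hXY.comp measurable_id hT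
  rw [(indepFun_iff_map_prod_eq_prod_map_map (g := fun ω => T (Y ω)) hX.aemeasurable
      (hT.comp hY).aemeasurable).1 hXTY,
    (indepFun_iff_map_prod_eq_prod_map_map hX.aemeasurable hY.aemeasurable).1 hXY, hTY]

section SphericalSymmetry

variable {Ω ι : Type*} [MeasurableSpace Ω] [Fintype ι] {P : Measure Ω} [IsFiniteMeasure P]
  {R : Ω → ℝ} {U : Ω → ι → ℝ} {O : Matrix ι ι ℝ} {a : ι} {B₁ : Set ℝ} {f : (ι → ℝ) → ℝ}

theorem setIntegral_comp_mulVec_eq (hR : Measurable R) (hU : Measurable U) (hRU : IndepFun R U P)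
    (hO : P.map (fun ω => O *ᵥ U ω) = P.map U) (hOa : ∀ z, (O *ᵥ z) a = z a)
    (hB₁ : MeasurableSet B₁) (hf : Measurable f) :
    ∫ ω in (fun ω => (R ω • U ω) a) ⁻¹' B₁, f (O *ᵥ (R ω • U ω)) ∂P
      = ∫ ω in (fun ω => (R ω • U ω) a) ⁻¹' B₁, f (R ω • U ω) ∂P := by
  have hsmul : Measurable fun p : ℝ × (ι → ℝ) => p.1 • p.2 := measurable_fst.smul measurable_snd
  have hF : Measurable fun p : ℝ × (ι → ℝ) => f (p.1 • p.2) := hf.comp hsmul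
  set S : Set (ℝ × (ι → ℝ)) := (fun p => (p.1 • p.2) a) ⁻¹' B₁
  have hS : MeasurableSet S := ((measurable_pi_apply a).comp hsmul) hB₁
  have hO_meas : Measurable (O *ᵥ ·) := by fun_prop
  have hOU : Measurable fun ω => O *ᵥ U ω := hO_meas.comp hU
  have hpre : (fun ω => (R ω, O *ᵥ U ω)) ⁻¹' S = (fun ω => (R ω • U ω) a) ⁻¹' B₁ := by
    ext ω; simp [S, hOa]
  calc ∫ ω in (fun ω => (R ω • U ω) a) ⁻¹' B₁, f (O *ᵥ (R ω • U ω)) ∂P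
      = ∫ p in S, f (p.1 • p.2) ∂P.map (fun ω => (R ω, O *ᵥ U ω)) := by
        rw [setIntegral_map hS hF.aestronglyMeasurable (hR.prodMk hOU).aemeasurable, hpre]
        simp_rw [mulVec_smul]
    _ = ∫ p in S, f (p.1 • p.2) ∂P.map (fun ω => (R ω, U ω)) := by
        rw [map_prodMk_comp_eq_of_indepFun hR hU hO_meas hRU hO]
    _ = _ := setIntegral_map hS hF.aestronglyMeasurable (hR.prodMk hU).aemeasurable

theorem setIntegral_eq_zero_of_comp_mulVec_eq_neg (hR : Measurable R) (hU : Measurable U)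
    (hRU : IndepFun R U P) (hO : P.map (fun ω => O *ᵥ U ω) = P.map U)
    (hOa : ∀ z, (O *ᵥ z) a = z a) (hB₁ : MeasurableSet B₁) (hf : Measurable f)
    (hf_odd : ∀ z, f (O *ᵥ z) = -f z) :
    ∫ ω in (fun ω => (R ω • U ω) a) ⁻¹' B₁, f (R ω • U ω) ∂P = 0 := by
  have h := setIntegral_comp_mulVec_eq hR hU hRU hO hOa hB₁ hf
  simp only [hf_odd, integral_neg] at h
  linarith

end SphericalSymmetry

section OrthogonalSymmetries

variable {ι : Type*} [Fintype ι] [DecidableEq ι]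

def signFlip (k : ι) : Matrix ι ι ℝ := diagonal (Function.update 1 k (-1))

theorem signFlip_mul_transpose (k : ι) : signFlip k * (signFlip k)ᵀ = 1 := by
  rw [signFlip, diagonal_transpose, diagonal_mul_diagonal, ← diagonal_one]
  congr 1
  ext l
  rcases eq_or_ne l k with rfl | h <;> simp [Function.update_of_ne, *]

theorem signFlip_mulVec_apply (k l : ι) (z : ι → ℝ) :
    (signFlip k *ᵥ z) l = if l = k then -z l else z l := by
  rcases eq_or_ne l k with rfl | h <;> simp [signFlip, mulVec_diagonal, Function.update_of_ne, *]

theorem permMatrix_mul_transpose (σ : Equiv.Perm ι) :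
    σ.permMatrix ℝ * (σ.permMatrix ℝ)ᵀ = 1 := by
  rw [transpose_permMatrix, ← permMatrix_mul, inv_mul_cancel, permMatrix_one]

end OrthogonalSymmetries

theorem spherical_conditional_moments
    {Ω : Type*} [MeasurableSpace Ω] (P : Measure Ω) [IsProbabilityMeasure P]
    (n : ℕ) (hn : 2 ≤ n)
    (R : Ω → ℝ) (U : Ω → Fin n → ℝ) (hR : Measurable R) (hU : Measurable U)
    (hUrot : ∀ O : Matrix (Fin n) (Fin n) ℝ, O * Oᵀ = 1 →
      Measure.map (fun ω => O *ᵥ U ω) P = Measure.map U P)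
    (hindep : IndepFun R U P)
    (Z : Ω → Fin n → ℝ) (hZ : Z = fun ω => R ω • U ω)
    (B₁ : Set ℝ) (hB₁ : MeasurableSet B₁)
    (B : Set Ω) (hB : B = (fun ω => Z ω ⟨0, by omega⟩) ⁻¹' B₁) :
    (∀ i j : Fin n, i ≠ j → condE P B (fun ω => Z ω i * Z ω j) = 0) ∧
    (∀ i : Fin n, i ≠ ⟨0, by omega⟩ → condE P B (fun ω => Z ω i) = 0) ∧
    (∀ i j : Fin n, i ≠ ⟨0, by omega⟩ → j ≠ ⟨0, by omega⟩ →
      condE P B (fun ω => Z ω i ^ 2) = condE P B (fun ω => Z ω j ^ 2)) := by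
  subst hZ hB
  set a : Fin n := ⟨0, by omega⟩
  have h_odd : ∀ k ≠ a, ∀ {f : (Fin n → ℝ) → ℝ}, Measurable f →
      (∀ z, f (signFlip k *ᵥ z) = -f z) →
        condE P ((fun ω => (R ω • U ω) a) ⁻¹' B₁) (fun ω => f (R ω • U ω)) = 0 :=
    fun k hk f hf hf_odd => by
      rw [condE_eq_smul_setIntegral, setIntegral_eq_zero_of_comp_mulVec_eq_neg hR hU hindep
        (hUrot _ (signFlip_mul_transpose k)) (fun z => by simp [signFlip_mulVec_apply, hk.symm])
        hB₁ hf hf_odd, smul_zero]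
  refine ⟨fun i j hij => ?_, fun i hi => ?_, fun i j hi hj => ?_⟩
  · by_cases hi : i = a
    · exact h_odd j (hi ▸ hij.symm) (f := fun z => z i * z j) (by fun_prop)
        fun z => by simp [signFlip_mulVec_apply, hij]
    · exact h_odd i hi (f := fun z => z i * z j) (by fun_prop)
        fun z => by simp [signFlip_mulVec_apply, hij.symm]
  · exact h_odd i hi (f := fun z => z i) (by fun_prop) fun z => by simp [signFlip_mulVec_apply]
  · rw [condE_eq_smul_setIntegral, condE_eq_smul_setIntegral,
      ← setIntegral_comp_mulVec_eq hR hU hindep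
        (hUrot _ (permMatrix_mul_transpose (Equiv.swap i j)))
        (fun z => by simp [permMatrix_mulVec, Equiv.swap_apply_of_ne_of_ne hi.symm hj.symm]) hB₁
        (f := fun z => z j ^ 2) (by fun_prop)]
    simp [permMatrix_mulVec]
end

section
/- Let (V₁, V₂) be a two-dimensional random vector with joint probability density (x, y) ↦ g(½(x² + y²)) on ℝ², where g : [0,∞) → [0,∞) is measurable, and assume E[V₂²] < ∞. Define g₁(t) := ∫_ℝ g(t + ½u²) du and h(w) := ∫₀^∞ g₁(v + ½w²) dv. Then for every Borel set B ⊆ ℝ with P[V₁ ∈ B] > 0, the conditional variance of V₂ given {V₁ ∈ B} satisfies Var[V₂ | V₁ ∈ B] = (∫_B h(w) dw) / P[V₁ ∈ B]. -/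
open MeasureTheory ProbabilityTheory

/-!
The reflection `(x, y) ↦ (x, -y)` preserves the law of `(V₁, V₂)`, so `E[V₂; V₁ ∈ B] = 0` and the
conditional variance is the conditional second moment `E[V₂²; V₁ ∈ B] / P[V₁ ∈ B]`. By Tonelli,
`E[V₂²; V₁ ∈ B] = ∫_B ∫ y² g((x² + y²)/2) dy dx`, and the inner integral is `h x`: with
`φ s = g(x²/2 + s)`, both `∫ y² φ(y²/2) dy` and `∫₀^∞ ∫ φ(v + u²/2) du dv` equal
`∫₀^∞ |{u : u²/2 < s}| φ(s) ds` (substitute `s = y²/2`, resp. `s = v + u²/2`).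
Everything is computed in `ℝ≥0∞`; finiteness of `E[V₂²]` makes `h` agree a.e. on `B` with the
`ℝ≥0∞`-valued tail, which converts the result back to real integrals.
-/

open Set
open scoped ENNReal

theorem lintegral_comp_abs (f : ℝ → ℝ≥0∞) :
    ∫⁻ x, f |x| = 2 * ∫⁻ x in Ioi 0, f x := by
  have hpos : ∫⁻ x in Ioi 0, f |x| = ∫⁻ x in Ioi 0, f x :=
    setLIntegral_congr_fun measurableSet_Ioi fun x hx => by rw [abs_of_pos hx]
  have hneg : ∫⁻ x in Iic 0, f |x| = ∫⁻ x in Ioi 0, f x := by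
    have himage : Iio (0 : ℝ) = Neg.neg '' Ioi 0 := by simp
    rw [← hpos, ← restrict_Iio_eq_restrict_Iic, himage,
      ← (Measure.measurePreserving_neg volume).setLIntegral_comp_emb
        (Homeomorph.neg ℝ).measurableEmbedding]
    simp only [abs_neg]
  rw [← lintegral_add_compl _ measurableSet_Ioi, compl_Ioi, hpos, hneg, two_mul]

theorem setLIntegral_Ioi_comp_add_right (f : ℝ → ℝ≥0∞) (a : ℝ) :
    ∫⁻ v in Ioi 0, f (v + a) = ∫⁻ s in Ioi a, f s := by
  rw [(measurePreserving_add_right volume a).setLIntegral_comp_emb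
    (measurableEmbedding_addRight a), image_add_const_Ioi, zero_add]

theorem setLIntegral_Ioi_comp_sq_half (f : ℝ → ℝ≥0∞) :
    ∫⁻ y in Ioi 0, ENNReal.ofReal y * f (y ^ 2 / 2) = ∫⁻ s in Ioi 0, f s := by
  have himage : (fun y : ℝ => y ^ 2 / 2) '' Ioi 0 = Ioi 0 := by
    ext s
    constructor
    · rintro ⟨y, hy, rfl⟩
      exact mem_Ioi.2 (by simp only [mem_Ioi] at hy; positivity)
    · intro hs
      have h2s : 0 < 2 * s := by linarith [mem_Ioi.1 hs]
      refine ⟨Real.sqrt (2 * s), Real.sqrt_pos.2 h2s, ?_⟩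
      simp only [Real.sq_sqrt h2s.le]
      ring
  have hderiv : ∀ y ∈ Ioi (0 : ℝ), HasDerivWithinAt (fun y : ℝ => y ^ 2 / 2) y (Ioi 0) y :=
    fun y _ => by simpa using ((hasDerivAt_pow 2 y).div_const 2).hasDerivWithinAt
  have hinj : InjOn (fun y : ℝ => y ^ 2 / 2) (Ioi 0) := fun x hx y hy hxy => by
    simp only [mem_Ioi] at hx hy
    simpa [pow_left_inj₀ hx.le hy.le] using hxy
  conv_rhs =>
    rw [← himage, lintegral_image_eq_lintegral_abs_deriv_mul measurableSet_Ioi hderiv hinj]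
  exact setLIntegral_congr_fun measurableSet_Ioi fun y hy => by rw [abs_of_pos hy]

theorem lintegral_setLIntegral_Ioi_eq_lintegral_measure_lt_mul {α : Type*} [MeasurableSpace α]
    {μ : Measure α} [SFinite μ] {ν : Measure ℝ} [SFinite ν] {f : α → ℝ} (hf : Measurable f)
    {φ : ℝ → ℝ≥0∞} (hφ : Measurable φ) :
    ∫⁻ a, ∫⁻ s in Ioi (f a), φ s ∂ν ∂μ = ∫⁻ s, μ {a | f a < s} * φ s ∂ν := by
  let F : α × ℝ → ℝ≥0∞ := {p | f p.1 < p.2}.indicator fun p => φ p.2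
  have hF : Measurable F :=
    (hφ.comp measurable_snd).indicator (measurableSet_lt (hf.comp measurable_fst) measurable_snd)
  calc ∫⁻ a, ∫⁻ s in Ioi (f a), φ s ∂ν ∂μ = ∫⁻ a, ∫⁻ s, F (a, s) ∂ν ∂μ := by
        refine lintegral_congr fun a => ?_
        rw [← lintegral_indicator measurableSet_Ioi]
        rfl
    _ = ∫⁻ s, ∫⁻ a, F (a, s) ∂μ ∂ν := lintegral_lintegral_swap hF.aemeasurable
    _ = ∫⁻ s, μ {a | f a < s} * φ s ∂ν := by
        refine lintegral_congr fun s => ?_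
        rw [mul_comm, ← lintegral_indicator_const (measurableSet_lt hf measurable_const)]
        rfl

theorem volume_setOf_sq_half_lt_sq_half {y : ℝ} (hy : 0 < y) :
    volume {u : ℝ | u ^ 2 / 2 < y ^ 2 / 2} = ENNReal.ofReal (2 * y) := by
  have : {u : ℝ | u ^ 2 / 2 < y ^ 2 / 2} = Ioo (-y) y := by
    ext u
    rw [mem_ofPred_eq, mem_Ioo, ← abs_lt, div_lt_div_iff_of_pos_right two_pos, sq_lt_sq,
      abs_of_pos hy]
  rw [this, Real.volume_Ioo]
  ring_nf

theorem lintegral_sq_mul_comp_sq_half {φ : ℝ → ℝ≥0∞} (hφ : Measurable φ) :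
    ∫⁻ y, ENNReal.ofReal (y ^ 2) * φ (y ^ 2 / 2) = ∫⁻ v in Ioi 0, ∫⁻ u, φ (v + u ^ 2 / 2) := by
  have hsupport : Function.support (fun s => volume {u : ℝ | u ^ 2 / 2 < s} * φ s) ⊆ Ioi 0 := by
    intro s hs
    by_contra hs0
    have hempty : {u : ℝ | u ^ 2 / 2 < s} = ∅ :=
      eq_empty_of_forall_notMem fun u hu => hs0 ((div_nonneg (sq_nonneg u) zero_le_two).trans_lt hu)
    simp [hempty] at hs
  symm
  calc ∫⁻ v in Ioi 0, ∫⁻ u, φ (v + u ^ 2 / 2)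
      = ∫⁻ u, ∫⁻ v in Ioi 0, φ (v + u ^ 2 / 2) :=
        lintegral_lintegral_swap (by fun_prop)
    _ = ∫⁻ u, ∫⁻ s in Ioi (u ^ 2 / 2), φ s := by
        simp only [setLIntegral_Ioi_comp_add_right]
    _ = ∫⁻ s, volume {u : ℝ | u ^ 2 / 2 < s} * φ s :=
        lintegral_setLIntegral_Ioi_eq_lintegral_measure_lt_mul (by fun_prop) hφ
    _ = ∫⁻ s in Ioi 0, volume {u : ℝ | u ^ 2 / 2 < s} * φ s :=
        (setLIntegral_eq_of_support_subset hsupport).symm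
    _ = ∫⁻ y in Ioi 0, 2 * (ENNReal.ofReal (y ^ 2) * φ (y ^ 2 / 2)) := by
        rw [← setLIntegral_Ioi_comp_sq_half]
        refine setLIntegral_congr_fun measurableSet_Ioi fun y hy => ?_
        rw [volume_setOf_sq_half_lt_sq_half hy, ← mul_assoc, ← mul_assoc,
          ← ENNReal.ofReal_mul hy.le, ← ENNReal.ofReal_ofNat 2,
          ← ENNReal.ofReal_mul zero_le_two]
        ring_nf
    _ = ∫⁻ y, ENNReal.ofReal (y ^ 2) * φ (y ^ 2 / 2) := by
        rw [lintegral_const_mul' _ _ ENNReal.ofNat_ne_top, ← lintegral_comp_abs]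
        simp only [sq_abs]

/-- `radialMarginal (ofReal ∘ g)` and `radialTail (ofReal ∘ g)` are the `ℝ≥0∞`-valued versions of
`g₁` and `h`. -/
noncomputable def radialMarginal (ψ : ℝ → ℝ≥0∞) (t : ℝ) : ℝ≥0∞ :=
  ∫⁻ u, ψ (t + u ^ 2 / 2)

noncomputable def radialTail (ψ : ℝ → ℝ≥0∞) (w : ℝ) : ℝ≥0∞ :=
  ∫⁻ v in Ioi 0, radialMarginal ψ (v + w ^ 2 / 2)

section Radial

variable {ψ : ℝ → ℝ≥0∞}

theorem measurable_radialMarginal (hψ : Measurable ψ) : Measurable (radialMarginal ψ) :=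
  Measurable.lintegral_prod_right' (f := fun p : ℝ × ℝ => ψ (p.1 + p.2 ^ 2 / 2)) (by fun_prop)

theorem measurable_radialTail (hψ : Measurable ψ) : Measurable (radialTail ψ) :=
  Measurable.lintegral_prod_right'
    (f := fun p : ℝ × ℝ => radialMarginal ψ (p.2 + p.1 ^ 2 / 2))
    ((measurable_radialMarginal hψ).comp (by fun_prop))

theorem radialTail_eq_lintegral_sq_mul (hψ : Measurable ψ) (w : ℝ) :
    radialTail ψ w = ∫⁻ y, ENNReal.ofReal (y ^ 2) * ψ ((w ^ 2 + y ^ 2) / 2) := by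
  calc radialTail ψ w = ∫⁻ v in Ioi 0, ∫⁻ u, ψ (v + u ^ 2 / 2 + w ^ 2 / 2) := by
        simp only [radialTail, radialMarginal, add_right_comm _ (w ^ 2 / 2)]
    _ = ∫⁻ y, ENNReal.ofReal (y ^ 2) * ψ (y ^ 2 / 2 + w ^ 2 / 2) :=
        (lintegral_sq_mul_comp_sq_half (φ := fun s => ψ (s + w ^ 2 / 2)) (by fun_prop)).symm
    _ = ∫⁻ y, ENNReal.ofReal (y ^ 2) * ψ ((w ^ 2 + y ^ 2) / 2) := by
        simp only [add_div, add_comm (w ^ 2 / 2)]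

theorem setLIntegral_sq_snd_withDensity_radial (hψ : Measurable ψ) {B : Set ℝ}
    (hB : MeasurableSet B) :
    ∫⁻ p in B ×ˢ univ, ENNReal.ofReal (p.2 ^ 2)
        ∂(volume.withDensity fun p : ℝ × ℝ => ψ ((p.1 ^ 2 + p.2 ^ 2) / 2))
      = ∫⁻ x in B, radialTail ψ x := by
  rw [restrict_withDensity (hB.prod .univ), lintegral_withDensity_eq_lintegral_mul _ (by fun_prop)
    (by fun_prop), Measure.volume_eq_prod, ← Measure.prod_restrict, Measure.restrict_univ,
    lintegral_prod _ (by fun_prop)]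
  refine lintegral_congr fun x => ?_
  rw [radialTail_eq_lintegral_sq_mul hψ]
  exact lintegral_congr fun y => mul_comm _ _

end Radial

theorem map_withDensity_eq_self {α : Type*} [MeasurableSpace α] {μ : Measure α} {T : α → α}
    (hT : MeasurePreserving T μ μ) {ρ : α → ℝ≥0∞} (hρ : Measurable ρ) (hρT : ∀ x, ρ (T x) = ρ x) :
    (μ.withDensity ρ).map T = μ.withDensity ρ := by
  ext s hs
  rw [Measure.map_apply hT.measurable hs, withDensity_apply _ (hT.measurable hs),
    withDensity_apply _ hs, ← hT.setLIntegral_comp_preimage hs hρ]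
  simp only [hρT]

theorem map_neg_snd_withDensity_radial {ψ : ℝ → ℝ≥0∞} (hψ : Measurable ψ) :
    (volume.withDensity fun p : ℝ × ℝ => ψ ((p.1 ^ 2 + p.2 ^ 2) / 2)).map (Prod.map id Neg.neg)
      = volume.withDensity fun p : ℝ × ℝ => ψ ((p.1 ^ 2 + p.2 ^ 2) / 2) := by
  refine map_withDensity_eq_self ?_ (by fun_prop) fun p => by simp only [Prod.map_snd, neg_sq]; rfl
  rw [Measure.volume_eq_prod]
  exact (MeasurePreserving.id volume).prod (Measure.measurePreserving_neg volume)

theorem setIntegral_snd_prod_univ_eq_zero {α : Type*} [MeasurableSpace α] {μ : Measure (α × ℝ)}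
    (hμ : μ.map (Prod.map id Neg.neg) = μ) (s : Set α) :
    ∫ p in s ×ˢ univ, p.2 ∂μ = 0 := by
  have hemb : MeasurableEmbedding (Prod.map id Neg.neg : α × ℝ → α × ℝ) :=
    (MeasurableEquiv.prodCongr (.refl α) (.neg ℝ)).measurableEmbedding
  have hreflect := hemb.setIntegral_map (μ := μ) (fun p => p.2) (s ×ˢ univ)
  have hpreimage : Prod.map id Neg.neg ⁻¹' (s ×ˢ univ) = s ×ˢ (univ : Set ℝ) := by ext; simp
  simp only [hμ, hpreimage, Prod.map_snd, integral_neg] at hreflect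
  linarith

theorem integral_eq_toReal_radialMarginal {g : ℝ → ℝ} (hg : Measurable g) (hg0 : ∀ t, 0 ≤ g t)
    (t : ℝ) : ∫ u, g (t + u ^ 2 / 2) = (radialMarginal (fun s => ENNReal.ofReal (g s)) t).toReal :=
  integral_eq_lintegral_of_nonneg_ae (.of_forall fun _ => hg0 _)
    (hg.comp (by fun_prop)).aestronglyMeasurable

theorem integral_eq_toReal_radialTail {g : ℝ → ℝ} (hg : Measurable g) (hg0 : ∀ t, 0 ≤ g t)
    {w : ℝ} (hw : radialTail (fun s => ENNReal.ofReal (g s)) w ≠ ∞) :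
    ∫ v in Ioi 0, ∫ u, g (v + w ^ 2 / 2 + u ^ 2 / 2)
      = (radialTail (fun s => ENNReal.ofReal (g s)) w).toReal := by
  simp only [integral_eq_toReal_radialMarginal hg hg0]
  have hψ : Measurable fun s => ENNReal.ofReal (g s) := by fun_prop
  have hmarg := (measurable_radialMarginal hψ).comp (measurable_add_const (w ^ 2 / 2))
  exact integral_toReal hmarg.aemeasurable (ae_lt_top hmarg hw)

theorem setIntegral_eq_toReal_setLIntegral_radialTail {g : ℝ → ℝ} (hg : Measurable g)
    (hg0 : ∀ t, 0 ≤ g t) {B : Set ℝ}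
    (hB : ∫⁻ w in B, radialTail (fun s => ENNReal.ofReal (g s)) w ≠ ∞) :
    ∫ w in B, ∫ v in Ioi 0, ∫ u, g (v + w ^ 2 / 2 + u ^ 2 / 2)
      = (∫⁻ w in B, radialTail (fun s => ENNReal.ofReal (g s)) w).toReal := by
  have htail := measurable_radialTail (by fun_prop : Measurable fun s => ENNReal.ofReal (g s))
  rw [← integral_toReal htail.aemeasurable (ae_lt_top htail hB)]
  refine integral_congr_ae ?_
  filter_upwards [ae_lt_top htail hB] with w hw
  exact integral_eq_toReal_radialTail hg hg0 hw.ne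

theorem condE_eq_inv_mul_setIntegral {Ω : Type*} [MeasurableSpace Ω] (P : Measure Ω) (S : Set Ω)
    (f : Ω → ℝ) : condE P S f = (P S).toReal⁻¹ * ∫ ω in S, f ω ∂P := by
  rw [condE, ProbabilityTheory.cond, integral_smul_measure, ENNReal.toReal_inv, smul_eq_mul]

theorem condVar_eq_of_setIntegral_eq_zero {Ω : Type*} [MeasurableSpace Ω] {P : Measure Ω}
    {S : Set Ω} {f : Ω → ℝ} (hf : ∫ ω in S, f ω ∂P = 0) :
    condVar P S f = (P S).toReal⁻¹ * ∫ ω in S, f ω ^ 2 ∂P := by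
  simp only [_root_.condVar, condE_eq_inv_mul_setIntegral P S, hf, mul_zero, sub_zero]

theorem spherical_density_conditional_variance_tail_density_general
    {Ω : Type*} [MeasurableSpace Ω] (P : Measure Ω)
    (V₁ V₂ : Ω → ℝ) (hV₁ : Measurable V₁) (hV₂ : Measurable V₂)
    (g : ℝ → ℝ) (hg : Measurable g) (hgnonneg : ∀ t, 0 ≤ g t)
    -- the law of `(V₁, V₂)` has density `(x, y) ↦ g ((x² + y²)/2)` w.r.t. Lebesgue measure:
    (hlaw : Measure.map (fun ω => (V₁ ω, V₂ ω)) P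
      = volume.withDensity fun p : ℝ × ℝ => ENNReal.ofReal (g ((p.1 ^ 2 + p.2 ^ 2) / 2)))
    (hV₂sq : MemLp V₂ 2 P)
    (g₁ : ℝ → ℝ) (hg₁ : g₁ = fun t => ∫ u : ℝ, g (t + u ^ 2 / 2))
    (h : ℝ → ℝ) (hh : h = fun w => ∫ v in Set.Ioi (0 : ℝ), g₁ (v + w ^ 2 / 2))
    (B : Set ℝ) (hB : MeasurableSet B) :
    condVar P (V₁ ⁻¹' B) V₂ = (∫ w in B, h w) / (P (V₁ ⁻¹' B)).toReal := by
  subst hg₁ hh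
  have hψ : Measurable fun s => ENNReal.ofReal (g s) := by fun_prop
  have hpair : Measurable fun ω => (V₁ ω, V₂ ω) := hV₁.prodMk hV₂
  have hS : V₁ ⁻¹' B = (fun ω => (V₁ ω, V₂ ω)) ⁻¹' (B ×ˢ univ) := by ext; simp
  have hmean : ∫ ω in V₁ ⁻¹' B, V₂ ω ∂P = 0 := by
    rw [hS, ← setIntegral_map (hB.prod .univ) measurable_snd.aestronglyMeasurable
      hpair.aemeasurable, hlaw]
    exact setIntegral_snd_prod_univ_eq_zero (map_neg_snd_withDensity_radial hψ) B
  have hsecond : ∫⁻ ω in V₁ ⁻¹' B, ENNReal.ofReal (V₂ ω ^ 2) ∂P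
      = ∫⁻ x in B, radialTail (fun s => ENNReal.ofReal (g s)) x := by
    rw [hS, ← setLIntegral_map (f := fun p : ℝ × ℝ => ENNReal.ofReal (p.2 ^ 2)) (hB.prod .univ)
      (by fun_prop) hpair, hlaw]
    exact setLIntegral_sq_snd_withDensity_radial hψ hB
  have hfinite : ∫⁻ x in B, radialTail (fun s => ENNReal.ofReal (g s)) x ≠ ∞ :=
    hsecond ▸ ((setLIntegral_le_lintegral _ _).trans_lt hV₂sq.integrable_sq.lintegral_lt_top).ne
  rw [condVar_eq_of_setIntegral_eq_zero hmean, integral_eq_lintegral_of_nonneg_ae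
    (.of_forall fun _ => sq_nonneg _) (by fun_prop), hsecond,
    setIntegral_eq_toReal_setLIntegral_radialTail hg hgnonneg hfinite, inv_mul_eq_div]

theorem spherical_density_conditional_variance_tail_density
    {Ω : Type*} [MeasurableSpace Ω] (P : Measure Ω) [IsProbabilityMeasure P]
    (V₁ V₂ : Ω → ℝ) (hV₁ : Measurable V₁) (hV₂ : Measurable V₂)
    (g : ℝ → ℝ) (hg : Measurable g) (hgnonneg : ∀ t, 0 ≤ g t)
    -- the law of `(V₁, V₂)` has density `(x, y) ↦ g ((x² + y²)/2)` w.r.t. Lebesgue measure: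
    (hlaw : Measure.map (fun ω => (V₁ ω, V₂ ω)) P
      = volume.withDensity fun p : ℝ × ℝ => ENNReal.ofReal (g ((p.1 ^ 2 + p.2 ^ 2) / 2)))
    (hV₂sq : MemLp V₂ 2 P)
    (g₁ : ℝ → ℝ) (hg₁ : g₁ = fun t => ∫ u : ℝ, g (t + u ^ 2 / 2))
    (h : ℝ → ℝ) (hh : h = fun w => ∫ v in Set.Ioi (0 : ℝ), g₁ (v + w ^ 2 / 2))
    (B : Set ℝ) (hB : MeasurableSet B) (hBpos : 0 < P (V₁ ⁻¹' B)) :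
    condVar P (V₁ ⁻¹' B) V₂ = (∫ w in B, h w) / (P (V₁ ⁻¹' B)).toReal :=
  spherical_density_conditional_variance_tail_density_general P V₁ V₂ hV₁ hV₂ g hg hgnonneg hlaw
    hV₂sq g₁ hg₁ h hh B hB
end
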